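/- arXiv:1912.09300 — 3 statements merged into one kernel-verified Lean document; each statement's English description precedes it below -/
import Mathlib

section
/- Let μ̄_n be the measure on ℂ with Lebesgue density ρ_n(z) = (1/π) e^{-n|z|²} Σ_{k=0}^{n-1} (n|z|²)^k / k!, and let D(μ̄_n, μ_∞) := sup |μ̄_n(B_R(z_0)) − μ_∞(B_R(z_0))|, the supremum running over all open balls B_R(z_0) ⊆ ℂ. Then lim_{n→∞} √(2πn) · D(μ̄_n, μ_∞) = 1. -/
/-!
The density `ρ_n` is radial and bounded by `1/π`, because `e^{-x} Σ_{k<n} x^k/k! ≤ 1`.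
Hence on the unit disc `μ̄_n` is dominated by `μ_∞`, which carries no mass outside it.
As `μ̄_n` has total mass at most `1`, for every ball `t` the difference `μ̄_n(t) - μ_∞(t)`
lies between the mass deficit `-(1 - μ̄_n(B_1))` on the disc and the mass `1 - μ̄_n(B_1)`
outside it; the unit disc attains the lower bound, so `D(μ̄_n, μ_∞) = 1 - μ̄_n(B_1)`.
In polar coordinates, with `x = n r²`, `μ̄_n(B_1)` becomes an average of Erlang distribution
functions, which telescopes to `1 - nⁿ e^{-n} / n!`; Stirling's formula finishes.
-/

open MeasureTheory Metric

/-- Density of the mean empirical spectral distribution of a normalized `n × n`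
Ginibre matrix: `ρ_n(z) = (1/π) e^{-n|z|²} Σ_{k=0}^{n-1} (n|z|²)^k / k!`. -/
noncomputable def rhoGin (n : ℕ) (z : ℂ) : ℝ :=
  (1 / Real.pi) * Real.exp (-(n : ℝ) * ‖z‖ ^ 2) *
    ∑ k ∈ Finset.range n, ((n : ℝ) * ‖z‖ ^ 2) ^ k / (Nat.factorial k : ℝ)

/-- The mean empirical spectral distribution `μ̄_n` of the Ginibre ensemble. -/
noncomputable def muBarGin (n : ℕ) : Measure ℂ :=
  volume.withDensity fun z => ENNReal.ofReal (rhoGin n z)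

/-- The Circular Law `μ_∞`: uniform distribution on the unit disc. -/
noncomputable def muInf : Measure ℂ :=
  volume.withDensity fun z => ENNReal.ofReal (if ‖z‖ < 1 then 1 / Real.pi else 0)

/-- `D(μ̄_n, μ_∞)`: the supremum of `|μ̄_n(B_R(z₀)) − μ_∞(B_R(z₀))|` over all open balls. -/
noncomputable def DGin (n : ℕ) : ℝ :=
  sSup {d : ℝ | ∃ (z₀ : ℂ) (R : ℝ), 0 < R ∧
    d = |(muBarGin n (ball z₀ R)).toReal - (muInf (ball z₀ R)).toReal|}

open Filter Topology Finset Real Nat Set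

noncomputable def expPartialSum (n : ℕ) (x : ℝ) : ℝ := ∑ i ∈ range n, x ^ i / i !

section expPartialSum

variable (n : ℕ)

lemma expPartialSum_succ (x : ℝ) :
    expPartialSum (n + 1) x = expPartialSum n x + x ^ n / n ! :=
  sum_range_succ _ _

lemma expPartialSum_succ_zero : expPartialSum (n + 1) 0 = 1 := by
  simp [expPartialSum, sum_range_succ']

lemma expPartialSum_nonneg {x : ℝ} (hx : 0 ≤ x) : 0 ≤ expPartialSum n x :=
  sum_nonneg fun _ _ => by positivity

lemma expPartialSum_le_exp {x : ℝ} (hx : 0 ≤ x) : expPartialSum n x ≤ exp x :=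
  sum_le_exp_of_nonneg hx n

lemma hasDerivAt_expPartialSum_succ (x : ℝ) :
    HasDerivAt (expPartialSum (n + 1)) (expPartialSum n x) x := by
  induction n with
  | zero =>
    rw [show expPartialSum 1 = fun _ => 1 from funext fun _ => by simp [expPartialSum]]
    simpa [expPartialSum] using hasDerivAt_const x (1 : ℝ)
  | succ n ih =>
    have hmon : HasDerivAt (fun x : ℝ => x ^ (n + 1) / (n + 1) !) (x ^ n / n !) x :=
      ((hasDerivAt_pow (n + 1) x).div_const _).congr_deriv <| by
        push_cast [factorial_succ, Nat.add_sub_cancel]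
        field_simp
    rw [show expPartialSum (n + 2) = _ from funext (expPartialSum_succ (n + 1))]
    exact (ih.add hmon).congr_deriv (expPartialSum_succ n x).symm

lemma sum_expPartialSum_succ (x : ℝ) :
    ∑ k ∈ range n, expPartialSum (k + 1) x = ∑ i ∈ range n, (n - i) * (x ^ i / i !) := by
  induction n with
  | zero => simp
  | succ n ih =>
    rw [sum_range_succ, ih, expPartialSum, sum_range_succ, sum_range_succ, ← add_assoc,
      ← sum_add_distrib]
    push_cast
    congr 1
    · exact sum_congr rfl fun i _ => by ring
    · ring

lemma sum_expPartialSum_succ_self :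
    ∑ k ∈ range n, expPartialSum (k + 1) n = n * (n ^ n / n !) := by
  have step (i : ℕ) : ((n : ℝ) - i) * (n ^ i / i !)
      = (i + 1 : ℕ) * ((n : ℝ) ^ (i + 1) / (i + 1) !) - i * (n ^ i / i !) := by
    push_cast [factorial_succ]
    field_simp
    ring
  rw [sum_expPartialSum_succ, sum_congr rfl fun i _ => step i, sum_range_sub
    (fun i => (i : ℝ) * (n ^ i / i !))]
  simp

/-- The `k`-th summand is the Erlang distribution function `1 - e^{-X} e_{k+1}(X)`. -/
lemma integral_exp_neg_mul_expPartialSum (X : ℝ) :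
    ∫ x in 0..X, exp (-x) * expPartialSum n x
      = n - exp (-X) * ∑ k ∈ range n, expPartialSum (k + 1) X := by
  have hderiv (x : ℝ) :
      HasDerivAt (fun x => -(exp (-x) * ∑ k ∈ range n, expPartialSum (k + 1) x))
        (exp (-x) * expPartialSum n x) x := by
    have hsum := HasDerivAt.fun_sum (u := range n) fun k _ => hasDerivAt_expPartialSum_succ k x
    refine ((hasDerivAt_neg x).exp.fun_mul hsum).fun_neg.congr_deriv ?_
    have hsucc : ∑ k ∈ range n, expPartialSum (k + 1) x
        = ∑ k ∈ range n, expPartialSum k x + expPartialSum n x := by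
      simp only [expPartialSum_succ, sum_add_distrib]
      rfl
    rw [hsucc]
    ring
  rw [intervalIntegral.integral_eq_sub_of_hasDerivAt (fun x _ => hderiv x)
    (by apply Continuous.intervalIntegrable; unfold expPartialSum; fun_prop)]
  simp only [neg_zero, exp_zero, expPartialSum_succ_zero, sum_const, card_range, nsmul_eq_mul,
    mul_one, one_mul]
  ring

end expPartialSum

lemma integral_ball_zero_fun_norm (g : ℝ → ℝ) {R : ℝ} (hR : 0 ≤ R) :
    ∫ z in ball (0 : ℂ) R, g ‖z‖ = 2 * π * ∫ r in 0..R, r * g r := by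
  have hball : ∫ z in ball (0 : ℂ) R, g ‖z‖ = ∫ z : ℂ, (Iio R).indicator g ‖z‖ := by
    rw [← integral_indicator measurableSet_ball]
    congr 1 with z
    by_cases hz : ‖z‖ < R <;> simp [indicator, hz]
  have hradial : ∫ r in Ioi (0 : ℝ), r * (Iio R).indicator g r = ∫ r in 0..R, r * g r := by
    simp_rw [← indicator_mul_right (Iio R) (fun r => r) g,
      setIntegral_indicator measurableSet_Iio, Ioi_inter_Iio, intervalIntegral.integral_of_le hR,
      integral_Ioc_eq_integral_Ioo]
  rw [hball, integral_fun_norm_addHaar, Complex.finrank_real_complex, Measure.real,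
    Complex.volume_ball, ← hradial]
  simp only [ENNReal.ofReal_one, one_pow, one_mul, ENNReal.coe_toReal, NNReal.coe_real_pi,
    Nat.add_one_sub_one, pow_one, smul_eq_mul, nsmul_eq_mul, cast_ofNat]
  ring

theorem abs_measureReal_sub_le_of_restrict_le {α : Type*} [MeasurableSpace α]
    {μ ν : Measure α} [IsProbabilityMeasure μ] {s t : Set α} (hs : MeasurableSet s)
    (ht : MeasurableSet t) (hμ : μ sᶜ = 0) (hν : ν univ ≤ 1)
    (hνμ : ν.restrict s ≤ μ.restrict s) :
    |ν.real t - μ.real t| ≤ 1 - ν.real s := by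
  have : IsFiniteMeasure ν := ⟨hν.trans_lt ENNReal.one_lt_top⟩
  have hle {u : Set α} (hu : u ⊆ s) : ν.real u ≤ μ.real u := by
    have := Measure.le_iff'.1 hνμ u
    rw [Measure.restrict_apply' hs, Measure.restrict_apply' hs, inter_eq_left.2 hu] at this
    exact ENNReal.toReal_mono (measure_ne_top μ _) this
  have hμs : μ.real s = 1 := by
    rw [measureReal_def, (prob_compl_eq_zero_iff hs).1 hμ, ENNReal.toReal_one]
  have hμt : μ.real (t \ s) = 0 :=
    (measureReal_eq_zero_iff).2 (measure_mono_null (fun x hx => hx.2) hμ)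
  have hout : ν.real (t \ s) + ν.real s ≤ 1 := by
    rw [← measureReal_union disjoint_sdiff_left hs]
    exact (measureReal_mono (subset_univ _)).trans
      ((ENNReal.toReal_mono ENNReal.one_ne_top hν).trans_eq ENNReal.toReal_one)
  have hνt := measureReal_inter_add_sdiff (μ := ν) (s := t) hs
  have hμt' := measureReal_inter_add_sdiff (μ := μ) (s := t) hs
  have hνs := measureReal_inter_add_sdiff (μ := ν) (s := s) ht
  have hμs' := measureReal_inter_add_sdiff (μ := μ) (s := s) ht
  rw [inter_comm s t] at hνs hμs'
  have hin := hle (inter_subset_right : t ∩ s ⊆ s)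
  have hdiff := hle (sdiff_subset : s \ t ⊆ s)
  rw [abs_le]
  constructor <;> linarith [measureReal_nonneg (μ := ν) (s := t \ s)]

lemma rhoGin_eq (n : ℕ) (z : ℂ) :
    rhoGin n z = π⁻¹ * (exp (-(n * ‖z‖ ^ 2)) * expPartialSum n (n * ‖z‖ ^ 2)) := by
  rw [rhoGin, expPartialSum, neg_mul, one_div, mul_assoc]

lemma rhoGin_nonneg (n : ℕ) (z : ℂ) : 0 ≤ rhoGin n z := by
  rw [rhoGin_eq]
  have := expPartialSum_nonneg n (by positivity : (0 : ℝ) ≤ n * ‖z‖ ^ 2)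
  positivity

lemma rhoGin_le_inv_pi (n : ℕ) (z : ℂ) : rhoGin n z ≤ π⁻¹ := by
  have hx : (0 : ℝ) ≤ n * ‖z‖ ^ 2 := by positivity
  have h : exp (-(n * ‖z‖ ^ 2)) * expPartialSum n (n * ‖z‖ ^ 2) ≤ 1 :=
    calc _ ≤ exp (-(n * ‖z‖ ^ 2)) * exp (n * ‖z‖ ^ 2) := by
          gcongr; exact expPartialSum_le_exp n hx
      _ = 1 := by rw [← exp_add, neg_add_cancel, exp_zero]
  rw [rhoGin_eq]
  exact mul_le_of_le_one_right (by positivity) h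

lemma continuous_rhoGin (n : ℕ) : Continuous (rhoGin n) := by
  unfold rhoGin
  fun_prop

lemma integral_ball_zero_rhoGin {n : ℕ} (hn : 0 < n) {R : ℝ} (hR : 0 ≤ R) :
    ∫ z in ball (0 : ℂ) R, rhoGin n z
      = 1 - exp (-(n * R ^ 2)) * (∑ k ∈ range n, expPartialSum (k + 1) (n * R ^ 2)) / n := by
  have hsq (r : ℝ) : HasDerivAt (fun r : ℝ => n * r ^ 2) (2 * n * r) r :=
    ((hasDerivAt_pow 2 r).const_mul (n : ℝ)).congr_deriv (by ring)
  have hsubst := intervalIntegral.integral_comp_mul_deriv (a := 0) (b := R)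
    (g := fun x => exp (-x) * expPartialSum n x) (fun r _ => hsq r)
    (by fun_prop : Continuous fun r : ℝ => 2 * n * r).continuousOn
    (by unfold expPartialSum; fun_prop)
  have hn' : (n : ℝ) ≠ 0 := by positivity
  calc ∫ z in ball (0 : ℂ) R, rhoGin n z
      = 2 * π * ∫ r in 0..R,
          r * (π⁻¹ * (exp (-(n * r ^ 2)) * expPartialSum n (n * r ^ 2))) := by
        simp_rw [rhoGin_eq]
        exact integral_ball_zero_fun_norm
          (fun r => π⁻¹ * (exp (-(n * r ^ 2)) * expPartialSum n (n * r ^ 2))) hR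
    _ = (n : ℝ)⁻¹ *
          ∫ r in 0..R, exp (-(n * r ^ 2)) * expPartialSum n (n * r ^ 2) * (2 * n * r) := by
        rw [← intervalIntegral.integral_const_mul, ← intervalIntegral.integral_const_mul]
        congr 1 with r
        field_simp
    _ = _ := by
        simp only [Function.comp_def, zero_pow two_ne_zero, mul_zero] at hsubst
        rw [hsubst, integral_exp_neg_mul_expPartialSum]
        field_simp

lemma muBarGin_ball (n : ℕ) (z₀ : ℂ) (R : ℝ) :
    muBarGin n (ball z₀ R) = ENNReal.ofReal (∫ z in ball z₀ R, rhoGin n z) := by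
  rw [muBarGin, withDensity_apply _ measurableSet_ball, ofReal_integral_eq_lintegral_ofReal
    ((continuous_rhoGin n).continuousOn.integrableOn_compact (isCompact_closedBall z₀ R)
      |>.mono_set ball_subset_closedBall) (ae_of_all _ (rhoGin_nonneg n))]

lemma muBarGin_univ_le_one {n : ℕ} (hn : 0 < n) : muBarGin n univ ≤ 1 := by
  rw [← iUnion_ball_nat 0, Monotone.measure_iUnion fun a b hab =>
    ball_subset_ball (by exact_mod_cast hab)]
  refine iSup_le fun k => ?_
  rw [muBarGin_ball, integral_ball_zero_rhoGin hn k.cast_nonneg, ENNReal.ofReal_le_one,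
    sub_le_self_iff]
  have := sum_nonneg fun i (_ : i ∈ range n) =>
    expPartialSum_nonneg (i + 1) (by positivity : (0 : ℝ) ≤ n * (k : ℝ) ^ 2)
  positivity

lemma muBarGin_real_ball_zero_one {n : ℕ} (hn : 0 < n) :
    (muBarGin n).real (ball 0 1) = 1 - n ^ n * exp (-n) / n ! := by
  rw [measureReal_def, muBarGin_ball, ENNReal.toReal_ofReal
    (setIntegral_nonneg measurableSet_ball fun z _ => rhoGin_nonneg n z),
    integral_ball_zero_rhoGin hn zero_le_one]
  simp only [one_pow, mul_one, sum_expPartialSum_succ_self]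
  field_simp

lemma muInf_eq : muInf = ENNReal.ofReal π⁻¹ • volume.restrict (ball (0 : ℂ) 1) := by
  rw [muInf, ← withDensity_const, ← withDensity_indicator measurableSet_ball]
  congr 1 with z
  by_cases hz : ‖z‖ < 1 <;> simp [indicator, hz]

instance : IsProbabilityMeasure muInf := by
  constructor
  rw [muInf_eq]
  simp only [Measure.smul_apply, Measure.restrict_apply_univ, Complex.volume_ball, one_pow,
    ENNReal.ofReal_one, one_mul, smul_eq_mul]
  rw [← ENNReal.ofReal_coe_nnreal, NNReal.coe_real_pi, ← ENNReal.ofReal_mul (by positivity),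
    inv_mul_cancel₀ pi_ne_zero, ENNReal.ofReal_one]

lemma muInf_compl_ball : muInf (ball 0 1)ᶜ = 0 := by
  rw [muInf_eq, Measure.smul_apply, Measure.restrict_apply' measurableSet_ball, compl_inter_self,
    measure_empty, smul_zero]

lemma restrict_muBarGin_le_restrict_muInf (n : ℕ) :
    (muBarGin n).restrict (ball 0 1) ≤ muInf.restrict (ball 0 1) := by
  rw [muBarGin, muInf, restrict_withDensity measurableSet_ball,
    restrict_withDensity measurableSet_ball]
  refine withDensity_mono ((ae_restrict_mem measurableSet_ball).mono fun z hz => ?_)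
  dsimp only
  rw [if_pos (mem_ball_zero_iff.1 hz), one_div]
  exact ENNReal.ofReal_le_ofReal (rhoGin_le_inv_pi n z)

lemma DGin_eq {n : ℕ} (hn : 0 < n) : DGin n = n ^ n * exp (-n) / n ! := by
  have hbound := fun t (ht : MeasurableSet t) => abs_measureReal_sub_le_of_restrict_le
    (t := t) measurableSet_ball ht muInf_compl_ball (muBarGin_univ_le_one hn)
    (restrict_muBarGin_le_restrict_muInf n)
  rw [muBarGin_real_ball_zero_one hn, sub_sub_cancel] at hbound
  refine IsGreatest.csSup_eq ⟨⟨0, 1, one_pos, ?_⟩, ?_⟩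
  · have hμ : muInf.real (ball 0 1) = 1 := by
      rw [measureReal_def, (prob_compl_eq_zero_iff measurableSet_ball).1 muInf_compl_ball,
        ENNReal.toReal_one]
    change _ = |(muBarGin n).real _ - muInf.real _|
    rw [muBarGin_real_ball_zero_one hn, hμ, sub_sub_cancel_left, abs_neg,
      abs_of_nonneg (by positivity)]
  · rintro d ⟨z₀, R, -, rfl⟩
    exact hbound _ measurableSet_ball

/-- `lim_{n→∞} √(2πn) · D(μ̄_n, μ_∞) = 1`. -/
theorem stmt0 :
    Filter.Tendsto (fun n : ℕ => Real.sqrt (2 * Real.pi * n) * DGin n)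
      Filter.atTop (nhds 1) := by
  have hstirling := (Asymptotics.isEquivalent_iff_tendsto_one
    (Eventually.of_forall fun n => by positivity)).1 Stirling.factorial_isEquivalent_stirling.symm
  refine hstirling.congr' ((eventually_gt_atTop 0).mono fun n hn => ?_)
  simp only [Pi.div_apply]
  rw [DGin_eq hn, div_pow, ← exp_nat_mul, mul_one, exp_neg, mul_right_comm 2 π]
  ring
end

section
/- Fix integers m ≥ 1 and n ≥ 1. For every z ∈ ℂ with z ≠ 0, the density ρ_n^m satisfies the double contour integral representation ρ_n^m(z) = (1/(n(2πi)²)) ∮_{γ_n} [ ∫_ℝ (Γ(1/2+iu)/Γ(t))^m · n^{m(t − 1/2 − iu)} · |z|^{2(t − 3/2 − iu)} · i du ] · cot(πt) dt, where γ_n is the positively oriented boundary of the rectangle with vertices 3/4 − i, n + 1/4 − i, n + 1/4 + i, 3/4 + i (the inner integral being the contour integral over the vertical line Re(s) = 1/2 after parametrizing s = 1/2 + iu). -/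
open MeasureTheory Metric

/-- The Meijer G-function `G^{m,0}_{0,m}` along the inverse-Mellin contour `Re s = 1/2`:
`G_m(x) = (1/(2π)) ∫_ℝ Γ(1/2+iu)^m x^{-(1/2+iu)} du` (a real number; we take the real part
of the complex integral). For `m = 1`, `G_1(x) = e^{-x}`. -/
noncomputable def Gm (m : ℕ) (x : ℝ) : ℝ :=
  (1 / (2 * Real.pi)) *
    (∫ u : ℝ, Complex.Gamma (1 / 2 + u * Complex.I) ^ m *
      (x : ℂ) ^ (-(1 / 2 + u * Complex.I))).re

/-- The density `ρ_n^m(z) = n^{m−1} Σ_{k=0}^{n−1} (n^m|z|²)^k/(π (k!)^m) · G_m(n^m|z|²)`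
of the mean empirical spectral distribution of a product of `m` independent normalized
Ginibre matrices. -/
noncomputable def rhoProd (m n : ℕ) (z : ℂ) : ℝ :=
  (n : ℝ) ^ (m - 1) *
    ∑ k ∈ Finset.range n,
      ((n : ℝ) ^ m * ‖z‖ ^ 2) ^ k / (Real.pi * (Nat.factorial k : ℝ) ^ m) *
        Gm m ((n : ℝ) ^ m * ‖z‖ ^ 2)

/-- The mean empirical spectral distribution `μ̄_n^m`. -/
noncomputable def muBarProd (m n : ℕ) : Measure ℂ :=
  volume.withDensity fun z => ENNReal.ofReal (rhoProd m n z)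

/-- The `m`-th power of the Circular Law `μ_∞^m`, with Lebesgue density
`|z|^{2/m−2}/(πm)` on the open unit ball and `0` elsewhere. -/
noncomputable def muInfProd (m : ℕ) : Measure ℂ :=
  volume.withDensity fun z =>
    ENNReal.ofReal
      (if ‖z‖ < 1 then ‖z‖ ^ ((2 : ℝ) / m - 2) / (Real.pi * m) else 0)

/-- The contour integral over the positively oriented boundary `γ_n` of the rectangle with
vertices `3/4 − i`, `n + 1/4 − i`, `n + 1/4 + i`, `3/4 + i`: the sum of the four integrals
over its oriented sides. -/
noncomputable def rectContour (n : ℕ) (g : ℂ → ℂ) : ℂ :=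
  (∫ x in (3 / 4 : ℝ)..((n : ℝ) + 1 / 4), g ((x : ℂ) - Complex.I)) +
    (∫ y in (-1 : ℝ)..(1 : ℝ), g (((n : ℝ) + 1 / 4 : ℝ) + (y : ℂ) * Complex.I) * Complex.I) -
    (∫ x in (3 / 4 : ℝ)..((n : ℝ) + 1 / 4), g ((x : ℂ) + Complex.I)) -
    (∫ y in (-1 : ℝ)..(1 : ℝ), g ((3 / 4 : ℝ) + (y : ℂ) * Complex.I) * Complex.I)

/-!
With `X = n^m |z|²` and `s = 1/2 + iu`, the inner integrand factors as
`i |z|⁻² · X^t Γ(t)^{-m} · Γ(s)^m X^{-s}`, so the inner integral is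
`2πi G_m(X) |z|⁻² · X^t / Γ(t)^m` (the `u`-integral is real because conjugation acts on it
as `u ↦ -u`).
The function `t ↦ X^t / Γ(t)^m` is entire and `cot(πt)` has simple poles of residue `1/π` at the
integers, of which `γ_n` encloses `1, …, n`. The residue theorem on the rectangle (subtract the
principal parts, remove the singularities, apply Cauchy–Goursat) turns the contour integral into
`2i Σ_{k=1}^n X^k / ((k-1)!)^m`, which is the sum defining `ρ_n^m`.
-/

open Complex Filter Topology Set
open scoped Interval Real ComplexConjugate

def rectBoundary (n : ℕ) : Set ℂ :=
  [[3 / 4, (n : ℝ) + 1 / 4]] ×ℂ {-1, 1} ∪ {3 / 4, (n : ℝ) + 1 / 4} ×ℂ [[-1, 1]]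

section RectContour

variable {n : ℕ} {F G : ℂ → ℂ}

lemma horizontal_mem_rectBoundary {x : ℝ} (hx : x ∈ [[3 / 4, (n : ℝ) + 1 / 4]]) :
    (x : ℂ) - I ∈ rectBoundary n ∧ (x : ℂ) + I ∈ rectBoundary n := by
  simp only [rectBoundary, mem_union, mem_reProdIm, mem_insert_iff, mem_singleton_iff]
  simp_all

lemma vertical_mem_rectBoundary {y : ℝ} (hy : y ∈ [[-1, 1]]) :
    (((n : ℝ) + 1 / 4 : ℝ) : ℂ) + y * I ∈ rectBoundary n ∧
      ((3 / 4 : ℝ) : ℂ) + y * I ∈ rectBoundary n := by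
  simp only [rectBoundary, mem_union, mem_reProdIm, mem_insert_iff, mem_singleton_iff]
  simp_all

lemma rectBoundary_subset (n : ℕ) :
    rectBoundary n ⊆ [[3 / 4, (n : ℝ) + 1 / 4]] ×ℂ [[-1, 1]] := by
  rintro t (⟨hre, him⟩ | ⟨hre, him⟩) <;>
    simp only [mem_preimage, mem_insert_iff, mem_singleton_iff] at him hre
  · exact ⟨hre, by rcases him with h | h <;> simp [h]⟩
  · exact ⟨by rcases hre with h | h <;> simp only [mem_preimage, h, left_mem_uIcc, right_mem_uIcc],
      him⟩

lemma disjoint_rectBoundary (n : ℕ) :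
    Disjoint (rectBoundary n) (Ioo (3 / 4) ((n : ℝ) + 1 / 4) ×ℂ Ioo (-1) 1) := by
  rw [Set.disjoint_left]
  rintro t (⟨-, him⟩ | ⟨hre, -⟩) ⟨⟨hre₁, hre₂⟩, him₁, him₂⟩
  · simp only [mem_preimage, mem_insert_iff, mem_singleton_iff] at him
    rcases him with h | h <;> rw [h] at him₁ him₂ <;> linarith
  · simp only [mem_preimage, mem_insert_iff, mem_singleton_iff] at hre
    rcases hre with h | h <;> rw [h] at hre₁ hre₂ <;> linarith

lemma intervalIntegrable_rectContour_sides (hF : ContinuousOn F (rectBoundary n)) :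
    IntervalIntegrable (fun x : ℝ => F (x - I)) volume (3 / 4) ((n : ℝ) + 1 / 4) ∧
    IntervalIntegrable (fun y : ℝ => F (((n : ℝ) + 1 / 4 : ℝ) + y * I) * I) volume (-1) 1 ∧
    IntervalIntegrable (fun x : ℝ => F (x + I)) volume (3 / 4) ((n : ℝ) + 1 / 4) ∧
    IntervalIntegrable (fun y : ℝ => F ((3 / 4 : ℝ) + y * I) * I) volume (-1) 1 := by
  have h {a b : ℝ} (p : ℝ → ℂ) (hp : Continuous p) (hmem : ∀ x ∈ [[a, b]], p x ∈ rectBoundary n) :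
      IntervalIntegrable (fun x => F (p x)) volume a b :=
    (hF.comp hp.continuousOn hmem).intervalIntegrable
  refine ⟨h _ (by fun_prop) fun x hx => (horizontal_mem_rectBoundary hx).1,
    (h _ (by fun_prop) fun y hy => (vertical_mem_rectBoundary hy).1).mul_const I,
    h _ (by fun_prop) fun x hx => (horizontal_mem_rectBoundary hx).2,
    (h _ (by fun_prop) fun y hy => (vertical_mem_rectBoundary hy).2).mul_const I⟩

lemma rectContour_congr (h : EqOn F G (rectBoundary n)) : rectContour n F = rectContour n G := by
  unfold rectContour
  rw [intervalIntegral.integral_congr fun x hx => h (horizontal_mem_rectBoundary hx).1,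
    intervalIntegral.integral_congr fun x hx => h (horizontal_mem_rectBoundary hx).2,
    intervalIntegral.integral_congr fun y hy =>
      congrArg (· * I) (h (vertical_mem_rectBoundary hy).1),
    intervalIntegral.integral_congr fun y hy =>
      congrArg (· * I) (h (vertical_mem_rectBoundary hy).2)]

lemma rectContour_const_mul (c : ℂ) (F : ℂ → ℂ) :
    rectContour n (fun t => c * F t) = c * rectContour n F := by
  simp only [rectContour, mul_assoc, intervalIntegral.integral_const_mul]
  ring

lemma rectContour_sub (hF : ContinuousOn F (rectBoundary n))
    (hG : ContinuousOn G (rectBoundary n)) :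
    rectContour n (fun t => F t - G t) = rectContour n F - rectContour n G := by
  obtain ⟨hF₁, hF₂, hF₃, hF₄⟩ := intervalIntegrable_rectContour_sides hF
  obtain ⟨hG₁, hG₂, hG₃, hG₄⟩ := intervalIntegrable_rectContour_sides hG
  simp only [rectContour, sub_mul]
  rw [intervalIntegral.integral_sub hF₁ hG₁, intervalIntegral.integral_sub hF₂ hG₂,
    intervalIntegral.integral_sub hF₃ hG₃, intervalIntegral.integral_sub hF₄ hG₄]
  ring

lemma rectContour_finsetSum {ι : Type*} (s : Finset ι) (F : ι → ℂ → ℂ)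
    (hF : ∀ i ∈ s, ContinuousOn (F i) (rectBoundary n)) :
    rectContour n (fun t => ∑ i ∈ s, F i t) = ∑ i ∈ s, rectContour n (F i) := by
  have h := fun i hi => intervalIntegrable_rectContour_sides (hF i hi)
  simp only [rectContour, Finset.sum_mul]
  rw [intervalIntegral.integral_finsetSum fun i hi => (h i hi).1,
    intervalIntegral.integral_finsetSum fun i hi => (h i hi).2.1,
    intervalIntegral.integral_finsetSum fun i hi => (h i hi).2.2.1,
    intervalIntegral.integral_finsetSum fun i hi => (h i hi).2.2.2]
  simp only [← Finset.sum_add_distrib, ← Finset.sum_sub_distrib]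

lemma rectContour_eq_zero_of_differentiableOn
    (hF : DifferentiableOn ℂ F ([[3 / 4, (n : ℝ) + 1 / 4]] ×ℂ [[-1, 1]])) :
    rectContour n F = 0 := by
  have h := integral_boundary_rect_eq_zero_of_differentiableOn F
    ((3 / 4 : ℝ) - I) (((n : ℝ) + 1 / 4 : ℝ) + I) (by simpa using hF)
  simp only [rectContour, intervalIntegral.integral_mul_const]
  simp only [sub_re, sub_im, add_re, add_im, ofReal_re, ofReal_im, I_re, I_im, sub_zero,
    add_zero, zero_sub, zero_add, ofReal_neg, ofReal_one, neg_mul, one_mul, smul_eq_mul,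
    ← sub_eq_add_neg] at h
  linear_combination h

end RectContour

lemma Complex.log_neg_of_im_neg {w : ℂ} (hw : w.im < 0) : log (-w) = log w + π * I := by
  rw [log, log, norm_neg, arg_neg_eq_arg_add_pi_of_im_neg hw]
  push_cast
  ring

lemma integral_inv_mul_eq_log_sub {p v : ℂ} {a b : ℝ} {f : ℝ → ℂ}
    (hf : ∀ x, f x = (p + x * v)⁻¹ * v) (h : ∀ x ∈ [[a, b]], p + x * v ∈ slitPlane) :
    ∫ x in a..b, f x = log (p + b * v) - log (p + a * v) := by
  simp_rw [hf]
  refine intervalIntegral.integral_eq_sub_of_hasDerivAt (f := fun x : ℝ => log (p + x * v))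
    (fun x hx => ?_) ?_
  · have hlog := ((hasDerivAt_id (x : ℂ)).mul_const v |>.const_add p).clog (h x hx)
    simpa [div_eq_inv_mul] using hlog.comp_ofReal
  · refine ContinuousOn.intervalIntegrable fun x hx => ?_
    exact (((continuous_const.add (continuous_ofReal.mul continuous_const)).continuousAt.inv₀
      (slitPlane_ne_zero (h x hx))).mul continuousAt_const).continuousWithinAt

lemma rectContour_inv_sub {n : ℕ} {c : ℂ} (hc : c ∈ Ioo (3 / 4) ((n : ℝ) + 1 / 4) ×ℂ Ioo (-1) 1) :
    rectContour n (fun t => (t - c)⁻¹) = 2 * π * I := by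
  obtain ⟨⟨hre₁, hre₂⟩, him₁, him₂⟩ := hc
  simp only [rectContour]
  generalize (3 / 4 : ℝ) = a at *
  generalize (n : ℝ) + 1 / 4 = b at *
  rw [integral_inv_mul_eq_log_sub (p := -I - c) (v := 1) (fun x => by ring)
      fun x _ => mem_slitPlane_iff.mpr <| .inr <| by
        simp only [mul_one, add_im, sub_im, neg_im, I_im, ofReal_im, add_zero]; linarith,
    integral_inv_mul_eq_log_sub (p := b - c) (v := I) (fun y => by ring)
      fun y _ => mem_slitPlane_iff.mpr <| .inl <| by
        simp only [add_re, sub_re, ofReal_re, mul_re, I_re, I_im, ofReal_im]; linarith,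
    integral_inv_mul_eq_log_sub (p := I - c) (v := 1) (fun x => by ring)
      fun x _ => mem_slitPlane_iff.mpr <| .inr <| by
        simp only [mul_one, add_im, sub_im, I_im, ofReal_im, add_zero]; linarith,
    -- the left side crosses the branch cut of `log`, so it is integrated along `-(t - c)`
    integral_inv_mul_eq_log_sub (p := c - a) (v := -I) (fun y => by rw [← neg_sub, inv_neg]; ring)
      fun y _ => mem_slitPlane_iff.mpr <| .inl <| by
        simp only [add_re, sub_re, ofReal_re, mul_re, neg_re, neg_im, I_re, I_im, ofReal_im]
        linarith]
  have hA : ((a : ℂ) - I - c).im < 0 := by simp only [sub_im, ofReal_im, I_im]; linarith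
  have hD : (-((a : ℂ) + I - c)).im < 0 := by
    simp only [neg_im, sub_im, add_im, ofReal_im, I_im]; linarith
  have hlogA := log_neg_of_im_neg hA
  have hlogD := log_neg_of_im_neg hD
  rw [neg_neg] at hlogD
  push_cast
  ring_nf at hlogA hlogD ⊢
  linear_combination hlogD + hlogA

lemma tendsto_sub_mul_sum_inv_sub {s : Finset ℂ} {c : ℂ} (hc : c ∈ s) (a : ℂ → ℂ) :
    Tendsto (fun t => (t - c) * ∑ j ∈ s, a j * (t - j)⁻¹) (𝓝[≠] c) (𝓝 (a c)) := by
  have hterm : ∀ j ∈ s, Tendsto (fun t => (t - c) * (a j * (t - j)⁻¹)) (𝓝[≠] c)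
      (𝓝 (if c = j then a j else 0)) := by
    intro j _
    split_ifs with hcj
    · subst hcj
      refine tendsto_const_nhds.congr' ?_
      filter_upwards [self_mem_nhdsWithin] with t ht
      field_simp [sub_ne_zero.mpr ht]
    · have hcont : ContinuousAt (fun t => (t - c) * (a j * (t - j)⁻¹)) c :=
        (continuousAt_id.sub continuousAt_const).mul
          (continuousAt_const.mul
            ((continuousAt_id.sub continuousAt_const).inv₀ (sub_ne_zero.mpr hcj)))
      simpa using hcont.tendsto.mono_left nhdsWithin_le_nhds
  simpa [Finset.mul_sum, Finset.sum_ite_eq, hc] using tendsto_finsetSum s hterm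

lemma exists_differentiableOn_eqOn_of_tendsto_sub_mul {g : ℂ → ℂ} {U : Set ℂ} {P : Finset ℂ}
    (hU : IsOpen U) (hg : DifferentiableOn ℂ g (U \ P))
    (hP : ∀ c ∈ P, Tendsto (fun t => (t - c) * g t) (𝓝[≠] c) (𝓝 0)) :
    ∃ G, DifferentiableOn ℂ G U ∧ EqOn G g (U \ P) := by
  classical
  refine ⟨fun t => if t ∈ P then limUnder (𝓝[≠] t) g else g t, fun t ht => ?_,
    fun t ht => if_neg ht.2⟩
  refine DifferentiableAt.differentiableWithinAt ?_
  by_cases htP : t ∈ P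
  · set V := U \ (P.erase t : Set ℂ)
    have hV : V ∈ 𝓝 t := (hU.sdiff (P.erase t).finite_toSet.isClosed).mem_nhds
      ⟨ht, by simp⟩
    have ho : (fun z => g z - g t) =o[𝓝[≠] t] fun z => (z - t)⁻¹ := by
      refine (Asymptotics.isLittleO_iff_tendsto' ?_).mpr ?_
      · filter_upwards [self_mem_nhdsWithin] with z hz h0
        exact absurd (inv_eq_zero.mp h0) (sub_ne_zero.mpr hz)
      · have h0 : Tendsto (fun z => (z - t) * g t) (𝓝[≠] t) (𝓝 0) := by
          simpa using ((continuous_id.sub continuous_const).tendsto' t 0 (sub_self t)).mul_const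
            (g t) |>.mono_left nhdsWithin_le_nhds
        simpa [div_eq_mul_inv, mul_sub, mul_comm] using (hP t htP).sub h0
    have hd := Complex.differentiableOn_update_limUnder_of_isLittleO hV
      (hg.mono fun z hz => ⟨hz.1.1, fun hzP => hz.1.2 (Finset.mem_erase.mpr ⟨hz.2, hzP⟩)⟩) ho
    refine (hd.differentiableAt hV).congr_of_eventuallyEq (Filter.mem_of_superset hV fun z hz => ?_)
    by_cases hzt : z = t
    · subst hzt; simp [htP]
    · have hzP : z ∉ P := fun h => hz.2 (Finset.mem_erase.mpr ⟨hzt, h⟩)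
      simp [Function.update_of_ne hzt, hzP]
  · have hV : U \ P ∈ 𝓝 t := (hU.sdiff P.finite_toSet.isClosed).mem_nhds ⟨ht, htP⟩
    refine (hg.differentiableAt hV).congr_of_eventuallyEq (Filter.mem_of_superset hV fun z hz => ?_)
    simp [show z ∉ P from hz.2]

theorem rectContour_eq_of_tendsto_sub_mul {n : ℕ} {f a : ℂ → ℂ} {U : Set ℂ} {P : Finset ℂ}
    (hU : IsOpen U) (hrect : [[3 / 4, (n : ℝ) + 1 / 4]] ×ℂ [[-1, 1]] ⊆ U)
    (hP : ↑P ⊆ Ioo (3 / 4) ((n : ℝ) + 1 / 4) ×ℂ Ioo (-1) 1) (hf : DifferentiableOn ℂ f (U \ P))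
    (ha : ∀ c ∈ P, Tendsto (fun t => (t - c) * f t) (𝓝[≠] c) (𝓝 (a c))) :
    rectContour n f = 2 * π * I * ∑ c ∈ P, a c := by
  set S : ℂ → ℂ := fun t => ∑ c ∈ P, a c * (t - c)⁻¹
  have hbdry : rectBoundary n ⊆ U \ P := fun t ht =>
    ⟨hrect (rectBoundary_subset n ht),
      fun htP => (disjoint_rectBoundary n).notMem_of_mem_left ht (hP htP)⟩
  have hS_term : ∀ c ∈ P, DifferentiableOn ℂ (fun t => a c * (t - c)⁻¹) (U \ P) :=
    fun c hc t ht => ((differentiableAt_const _).mul ((differentiableAt_id.sub_const c).inv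
      (sub_ne_zero.mpr fun h : t = c => ht.2 (h ▸ hc)))).differentiableWithinAt
  have hS : DifferentiableOn ℂ S (U \ P) := by
    simpa [S] using DifferentiableOn.fun_sum hS_term
  have hpole : ∀ c ∈ P, Tendsto (fun t => (t - c) * (f t - S t)) (𝓝[≠] c) (𝓝 0) := fun c hc => by
    simpa [mul_sub] using (ha c hc).sub (tendsto_sub_mul_sum_inv_sub hc a)
  obtain ⟨G, hG, hGg⟩ := exists_differentiableOn_eqOn_of_tendsto_sub_mul hU (hf.sub hS) hpole
  have hzero : rectContour n (fun t => f t - S t) = 0 :=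
    (rectContour_congr (hGg.mono hbdry)).symm.trans
      (rectContour_eq_zero_of_differentiableOn (hG.mono hrect))
  have hres : rectContour n S = 2 * π * I * ∑ c ∈ P, a c := by
    rw [rectContour_finsetSum _ _ fun c hc => (hS_term c hc).continuousOn.mono hbdry,
      Finset.mul_sum]
    refine Finset.sum_congr rfl fun c hc => ?_
    rw [rectContour_const_mul, rectContour_inv_sub (hP hc), mul_comm]
  rwa [rectContour_sub (hf.continuousOn.mono hbdry) (hS.continuousOn.mono hbdry), hres,
    sub_eq_zero] at hzero

lemma Complex.sin_pi_mul_eq_zero_iff {t : ℂ} : sin (π * t) = 0 ↔ ∃ j : ℤ, t = j := by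
  rw [sin_eq_zero_iff]
  refine exists_congr fun j => ⟨fun h => ?_, fun h => by rw [h, mul_comm]⟩
  exact mul_left_cancel₀ (ofReal_ne_zero.mpr Real.pi_ne_zero) (by rw [h, mul_comm])

lemma Complex.differentiableAt_cot_pi_mul {t : ℂ} (h : sin (π * t) ≠ 0) :
    DifferentiableAt ℂ (fun t => cot (π * t)) t := by
  simp only [cot_eq_cos_div_sin]
  exact (by fun_prop : DifferentiableAt ℂ (fun t => cos (π * t)) t).div (by fun_prop) h

lemma Complex.tendsto_sub_mul_cot_pi_mul (j : ℤ) :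
    Tendsto (fun t => (t - j) * cot (π * t)) (𝓝[≠] (j : ℂ)) (𝓝 (π : ℂ)⁻¹) := by
  have hsin : sin (π * j) = 0 := sin_pi_mul_eq_zero_iff.mpr ⟨j, rfl⟩
  have hcos : cos (π * j) ≠ 0 := fun h => by
    simpa [hsin, h] using sin_sq_add_cos_sq (π * (j : ℂ))
  have hderiv : HasDerivAt (fun t => sin (π * t)) (π * cos (π * j)) j := by
    simpa [mul_comm] using ((hasDerivAt_id (j : ℂ)).const_mul (π : ℂ)).csin
  have hslope := hasDerivAt_iff_tendsto_slope.mp hderiv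
  have hcos_cont : ContinuousAt (fun t => cos (π * t)) j := by fun_prop
  have hlim := (hcos_cont.tendsto.mono_left nhdsWithin_le_nhds).mul
    (hslope.inv₀ (mul_ne_zero (ofReal_ne_zero.mpr Real.pi_ne_zero) hcos))
  convert hlim using 1
  · ext t
    simp only [cot_eq_cos_div_sin, slope_def_field, hsin, sub_zero, inv_div]
    ring
  · field_simp

theorem rectContour_mul_cot_pi_mul (n : ℕ) {Φ : ℂ → ℂ} (hΦ : Differentiable ℂ Φ) :
    rectContour n (fun t => Φ t * cot (π * t)) = 2 * I * ∑ k ∈ Finset.range n, Φ (k + 1) := by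
  set P : Finset ℂ := (Finset.range n).image fun k : ℕ => (k : ℂ) + 1
  set U : Set ℂ := re ⁻¹' Ioo 0 ((n : ℝ) + 1)
  have hrect : [[3 / 4, (n : ℝ) + 1 / 4]] ×ℂ [[-1, 1]] ⊆ U := fun t ht => by
    rcases mem_uIcc.mp ht.1 with h | h <;> constructor <;> linarith [n.cast_nonneg (α := ℝ)]
  have hP : ↑P ⊆ Ioo (3 / 4) ((n : ℝ) + 1 / 4) ×ℂ Ioo (-1) 1 := by
    simp only [P, Finset.coe_image, image_subset_iff]
    intro k hk
    have : (k : ℝ) + 1 ≤ n := by exact_mod_cast Finset.mem_range.mp hk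
    refine ⟨⟨?_, ?_⟩, by simp⟩ <;> simp only [add_re, natCast_re, one_re] <;>
      linarith [k.cast_nonneg (α := ℝ)]
  have hsin : ∀ t ∈ U \ P, sin (π * t) ≠ 0 := by
    rintro t ⟨⟨ht₀, htn⟩, htP⟩ h
    obtain ⟨j, rfl⟩ := sin_pi_mul_eq_zero_iff.mp h
    simp only [intCast_re] at ht₀ htn
    have hj₀ : 0 < j := by exact_mod_cast ht₀
    have hjn : j < n + 1 := by exact_mod_cast htn
    obtain ⟨k, rfl⟩ : ∃ k : ℕ, j = k + 1 := ⟨(j - 1).toNat, by omega⟩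
    exact htP (Finset.mem_image.mpr ⟨k, Finset.mem_range.mpr (by omega), by push_cast; rfl⟩)
  have hres : ∀ c ∈ P, Tendsto (fun t => (t - c) * (Φ t * cot (π * t))) (𝓝[≠] c)
      (𝓝 (Φ c * (π : ℂ)⁻¹)) := by
    simp only [P, Finset.mem_image]
    rintro c ⟨k, -, rfl⟩
    have h := ((hΦ _).continuousAt.tendsto.mono_left nhdsWithin_le_nhds).mul
      (tendsto_sub_mul_cot_pi_mul (k + 1))
    push_cast at h
    exact h.congr fun t => by ring
  have hf : DifferentiableOn ℂ (fun t => Φ t * cot (π * t)) (U \ P) := fun t ht =>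
    ((hΦ t).mul (differentiableAt_cot_pi_mul (hsin t ht))).differentiableWithinAt
  rw [rectContour_eq_of_tendsto_sub_mul (isOpen_Ioo.preimage continuous_re) hrect hP hf hres,
    Finset.sum_image fun _ _ _ _ h => by exact_mod_cast add_right_cancel h, ← Finset.sum_mul]
  field_simp [ofReal_ne_zero.mpr Real.pi_ne_zero]

lemma integral_Gamma_pow_mul_cpow_eq (m : ℕ) {x : ℝ} (hx : 0 ≤ x) :
    ∫ u : ℝ, Gamma (1 / 2 + u * I) ^ m * (x : ℂ) ^ (-(1 / 2 + u * I)) = 2 * π * Gm m x := by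
  set F : ℝ → ℂ := fun u => Gamma (1 / 2 + u * I) ^ m * (x : ℂ) ^ (-(1 / 2 + u * I))
  have hcpow (w : ℂ) : conj ((x : ℂ) ^ w) = (x : ℂ) ^ conj w := by
    rw [cpow_conj _ _ (by simp [arg_ofReal_of_nonneg hx, Real.pi_ne_zero.symm]), conj_ofReal]
  have hconj (u : ℝ) : conj (F u) = F (-u) := by
    have hs : conj (1 / 2 + u * I) = 1 / 2 + ((-u : ℝ) : ℂ) * I := by
      rw [map_add, map_mul, conj_ofReal, conj_I, map_div₀, map_one, map_ofNat]; push_cast; ring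
    simp only [F, map_mul, map_pow, ← Gamma_conj, hcpow, map_neg, hs]
  have hreal : conj (∫ u, F u) = ∫ u, F u := by
    rw [← integral_conj]
    simp_rw [hconj]
    exact integral_neg_eq_self F volume
  calc ∫ u, F u = ((∫ u, F u).re : ℂ) := ((conj_eq_iff_re (z := ∫ u, F u)).mp hreal).symm
    _ = 2 * π * Gm m x := by
      change _ = 2 * π * (((1 / (2 * π)) * (∫ u, F u).re : ℝ) : ℂ)
      push_cast
      field_simp

lemma natCast_cpow_mul_mul_ofReal_cpow (n m : ℕ) {r : ℝ} (hr : 0 < r) (w : ℂ) :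
    (n : ℂ) ^ ((m : ℂ) * w) * (r : ℂ) ^ (2 * (w - 1)) =
      ((r : ℂ) ^ 2)⁻¹ * (((n : ℝ) ^ m * r ^ 2 : ℝ) : ℂ) ^ w := by
  have harg : (r : ℂ).arg = 0 := arg_ofReal_of_nonneg hr.le
  rw [natCast_cpow_natCast_mul, cpow_ofNat_mul' (by simp [harg, Real.pi_pos])
    (by simp [harg, Real.pi_pos.le]), cpow_sub _ _ (by exact_mod_cast (pow_pos hr 2).ne'),
    cpow_one, ofReal_mul, mul_cpow_ofReal_nonneg (by positivity) (by positivity)]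
  push_cast
  ring

lemma integral_Gamma_div_pow_mul_cpow_eq (m : ℕ) {n : ℕ} (hn : n ≠ 0) {r : ℝ} (hr : 0 < r)
    (t : ℂ) :
    ∫ u : ℝ, (Gamma (1 / 2 + u * I) / Gamma t) ^ m * (n : ℂ) ^ ((m : ℂ) * (t - 1 / 2 - u * I)) *
        (r : ℂ) ^ (2 * (t - 3 / 2 - u * I)) * I =
      2 * π * I * Gm m ((n : ℝ) ^ m * r ^ 2) / r ^ 2 *
        ((((n : ℝ) ^ m * r ^ 2 : ℝ) : ℂ) ^ t * (Gamma t ^ m)⁻¹) := by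
  set X : ℝ := (n : ℝ) ^ m * r ^ 2
  have hX : (X : ℂ) ≠ 0 := by simp [X, hn, hr.ne']
  have hintegrand (u : ℝ) : (Gamma (1 / 2 + u * I) / Gamma t) ^ m *
      (n : ℂ) ^ ((m : ℂ) * (t - 1 / 2 - u * I)) * (r : ℂ) ^ (2 * (t - 3 / 2 - u * I)) * I =
      I / r ^ 2 * ((X : ℂ) ^ t * (Gamma t ^ m)⁻¹) *
        (Gamma (1 / 2 + u * I) ^ m * (X : ℂ) ^ (-(1 / 2 + u * I))) := by
    have h := natCast_cpow_mul_mul_ofReal_cpow n m hr (t - (1 / 2 + u * I))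
    rw [cpow_sub _ _ hX] at h
    rw [show t - 1 / 2 - u * I = t - (1 / 2 + u * I) by ring,
      show t - 3 / 2 - u * I = t - (1 / 2 + u * I) - 1 by ring, cpow_neg]
    linear_combination (Gamma (1 / 2 + u * I) / Gamma t) ^ m * I * h
  simp_rw [hintegrand]
  rw [integral_const_mul, integral_Gamma_pow_mul_cpow_eq m (by positivity)]
  ring

/-- Double contour integral representation for the density `ρ_n^m`:
`ρ_n^m(z) = (1/(n(2πi)²)) ∮_{γ_n} [∫_{Re s = 1/2} (Γ(s)/Γ(t))^m n^{m(t−s)} |z|^{2(t−s−1)} ds]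
cot(πt) dt`, the inner integral parametrized by `s = 1/2 + iu`, `u ∈ ℝ` (so `ds = i du`). -/
theorem stmt8 (m n : ℕ) (hm : 1 ≤ m) (hn : 1 ≤ n) (z : ℂ) (hz : z ≠ 0) :
    (rhoProd m n z : ℂ) =
      (1 / ((n : ℂ) * (2 * Real.pi * Complex.I) ^ 2)) *
        rectContour n (fun t =>
          (∫ u : ℝ,
            (Complex.Gamma (1 / 2 + u * Complex.I) / Complex.Gamma t) ^ m *
              (n : ℂ) ^ ((m : ℂ) * (t - 1 / 2 - u * Complex.I)) *
              ((‖z‖ : ℝ) : ℂ) ^ (2 * (t - 3 / 2 - u * Complex.I)) *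
              Complex.I) *
          Complex.cot (Real.pi * t)) := by
  have hn0 : n ≠ 0 := by omega
  have hr : 0 < ‖z‖ := norm_pos_iff.mpr hz
  simp only [integral_Gamma_div_pow_mul_cpow_eq m hn0 hr]
  set X : ℝ := (n : ℝ) ^ m * ‖z‖ ^ 2 with hX_def
  have hX : (X : ℂ) ≠ 0 :=
    ofReal_ne_zero.mpr (mul_ne_zero (pow_ne_zero _ (by exact_mod_cast hn0)) (pow_ne_zero _ hr.ne'))
  have hΦ : Differentiable ℂ fun t => (X : ℂ) ^ t * (Gamma t ^ m)⁻¹ := by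
    simp_rw [← inv_pow]
    exact (differentiable_id.const_cpow (Or.inl hX)).mul (differentiable_one_div_Gamma.pow m)
  simp only [mul_assoc (2 * π * I * Gm m X / ‖z‖ ^ 2 : ℂ)]
  rw [rectContour_const_mul, rectContour_mul_cot_pi_mul n hΦ]
  have hpow (k : ℕ) : (X : ℂ) ^ ((k : ℂ) + 1) = (X : ℂ) ^ (k + 1) := by
    exact_mod_cast cpow_natCast (X : ℂ) (k + 1)
  obtain ⟨m, rfl⟩ : ∃ m', m = m' + 1 := ⟨m - 1, by omega⟩
  simp only [rhoProd, Gamma_nat_eq_factorial, hpow, Finset.mul_sum, Nat.add_sub_cancel]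
  push_cast
  refine Finset.sum_congr rfl fun k _ => ?_
  have hnC : (n : ℂ) ≠ 0 := by exact_mod_cast hn0
  have hzC : (‖z‖ : ℂ) ≠ 0 := by exact_mod_cast hr.ne'
  rw [hX_def]
  push_cast
  field_simp
  ring
end

section
/- For every z ∈ ℂ, the logarithmic potential of the uniform distribution on the unit disc is given by: −(1/π) ∫_{B_1(0)} log|w − z| d𝔏(w) = (1 − |z|²)/2 if |z| ≤ 1, and = −log|z| if |z| > 1. -/
/-!
In polar coordinates the integral over the disc becomes `2π ∫₀¹ r · A(r) dr`, where `A(r)` is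
the average of `log ‖· - z‖` over the circle of radius `r`. Since `log ‖w - z‖` is harmonic away
from `z`, this average is `log (max r ‖z‖)` (Jensen's formula), and the remaining one-variable integral
is elementary. Integrability comes from `r log r` being integrable near `0`, transported to the
disc by the same change of variables.
-/

open MeasureTheory Metric Set Real

section PolarCoord

variable {E : Type*} [NormedAddCommGroup E] [NormedSpace ℝ E]

theorem Complex.polarCoord_symm_eq_circleMap (p : ℝ × ℝ) :
    Complex.polarCoord.symm p = circleMap 0 p.1 p.2 := by
  simp [circleMap_zero, Complex.exp_mul_I, ← Complex.ofReal_cos, ← Complex.ofReal_sin]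

theorem polarCoord_target_inter_preimage_ball (R : ℝ) :
    polarCoord.target ∩ Complex.polarCoord.symm ⁻¹' ball 0 R = Ioo 0 R ×ˢ Ioo (-π) π := by
  ext ⟨r, θ⟩
  simp only [polarCoord_target, mem_inter_iff, mem_prod, mem_Ioi, mem_Ioo, mem_preimage,
    mem_ball_zero_iff, Complex.norm_polarCoord_symm]
  constructor
  · rintro ⟨⟨hr, hθ⟩, hrR⟩
    exact ⟨⟨hr, by rwa [abs_of_pos hr] at hrR⟩, hθ⟩
  · rintro ⟨⟨hr, hrR⟩, hθ⟩
    exact ⟨⟨hr, hθ⟩, by rwa [abs_of_pos hr]⟩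

theorem integrable_iff_integrableOn_polarCoord_target (f : ℂ → E) :
    Integrable f ↔
      IntegrableOn (fun p : ℝ × ℝ ↦ p.1 • f (Complex.polarCoord.symm p)) polarCoord.target := by
  rw [← (Complex.volume_preserving_equiv_real_prod.symm).integrable_comp_emb
    Complex.measurableEquivRealProd.symm.measurableEmbedding, ← integrableOn_univ,
    integrableOn_congr_set_ae polarCoord_source_ae_eq_univ.symm,
    ← polarCoord.symm_image_target_eq_source,
    integrableOn_image_iff_integrableOn_abs_det_fderiv_smul volume
      polarCoord.open_target.measurableSet
      (fun p _ ↦ (hasFDerivAt_polarCoord_symm p).hasFDerivWithinAt) polarCoord.symm.injOn]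
  refine integrableOn_congr_fun (fun p hp ↦ ?_) polarCoord.open_target.measurableSet
  rw [det_fderivPolarCoordSymm, abs_of_pos hp.1]
  rfl

theorem smul_indicator_ball_comp_polarCoord_symm (f : ℂ → E) (R : ℝ) :
    (fun p : ℝ × ℝ ↦ p.1 • (ball 0 R).indicator f (Complex.polarCoord.symm p)) =
      (Complex.polarCoord.symm ⁻¹' ball 0 R).indicator
        (fun p ↦ p.1 • f (Complex.polarCoord.symm p)) := by
  ext p
  by_cases hp : Complex.polarCoord.symm p ∈ ball (0 : ℂ) R
  · rw [indicator_of_mem hp, indicator_of_mem (by exact hp)]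
  · rw [indicator_of_notMem hp, indicator_of_notMem (by exact hp), smul_zero]

theorem measurableSet_preimage_ball_polarCoord_symm (R : ℝ) :
    MeasurableSet (Complex.polarCoord.symm ⁻¹' ball 0 R) :=
  (Complex.measurableEquivRealProd.symm.measurable.comp
    continuous_polarCoord_symm.measurable) measurableSet_ball

theorem integrableOn_ball_iff_integrableOn_polarCoord (f : ℂ → E) (R : ℝ) :
    IntegrableOn f (ball 0 R) ↔
      IntegrableOn (fun p : ℝ × ℝ ↦ p.1 • f (Complex.polarCoord.symm p))
        (Ioo 0 R ×ˢ Ioo (-π) π) := by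
  rw [← integrable_indicator_iff measurableSet_ball,
    integrable_iff_integrableOn_polarCoord_target, smul_indicator_ball_comp_polarCoord_symm,
    IntegrableOn, integrable_indicator_iff (measurableSet_preimage_ball_polarCoord_symm R),
    IntegrableOn, Measure.restrict_restrict (measurableSet_preimage_ball_polarCoord_symm R),
    inter_comm, polarCoord_target_inter_preimage_ball]
  rfl

theorem integral_ball_eq_integral_polarCoord (f : ℂ → E) (R : ℝ) :
    ∫ w in ball 0 R, f w =
      ∫ p in Ioo 0 R ×ˢ Ioo (-π) π, p.1 • f (Complex.polarCoord.symm p) := by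
  rw [← integral_indicator measurableSet_ball, ← Complex.integral_comp_polarCoord_symm,
    smul_indicator_ball_comp_polarCoord_symm,
    setIntegral_indicator (measurableSet_preimage_ball_polarCoord_symm R),
    polarCoord_target_inter_preimage_ball]

theorem setIntegral_Ioo_neg_pi_pi_circleMap (f : ℂ → E) (c : ℂ) (R : ℝ) :
    ∫ θ in Ioo (-π) π, f (circleMap c R θ) = (2 * π) • circleAverage f c R := by
  have hper : Function.Periodic (fun θ ↦ f (circleMap c R θ)) (2 * π) := fun θ ↦ by
    simp only [periodic_circleMap c R θ]
  have hshift := hper.intervalIntegral_add_eq (-π) 0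
  rw [show -π + 2 * π = π by ring, zero_add] at hshift
  rw [circleAverage_def, smul_inv_smul₀ (by positivity), ← hshift,
    intervalIntegral.integral_of_le (by linarith [pi_pos]), integral_Ioc_eq_integral_Ioo]

theorem integral_ball_eq_integral_circleAverage {f : ℂ → E} {R : ℝ}
    (hf : IntegrableOn f (ball 0 R)) :
    ∫ w in ball 0 R, f w = (2 * π) • ∫ r in Ioo 0 R, r • circleAverage f 0 r := by
  rw [integrableOn_ball_iff_integrableOn_polarCoord, Measure.volume_eq_prod] at hf
  rw [integral_ball_eq_integral_polarCoord, Measure.volume_eq_prod, setIntegral_prod _ hf,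
    ← integral_smul]
  refine setIntegral_congr_fun measurableSet_Ioo fun r _ ↦ ?_
  simp only [Complex.polarCoord_symm_eq_circleMap]
  rw [integral_smul, setIntegral_Ioo_neg_pi_pi_circleMap, smul_comm]

end PolarCoord

theorem integrableOn_log_norm_ball (R : ℝ) : IntegrableOn (fun w : ℂ ↦ log ‖w‖) (ball 0 R) := by
  have hprod : IntegrableOn (fun p : ℝ × ℝ ↦ p.1 * log p.1 * 1) (Ioo 0 R ×ˢ Ioo (-π) π) := by
    rw [IntegrableOn, Measure.volume_eq_prod, ← Measure.prod_restrict]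
    exact Integrable.mul_prod (continuous_mul_log.integrableOn_Icc.mono_set Ioo_subset_Icc_self)
      (integrableOn_const measure_Ioo_lt_top.ne)
  rw [integrableOn_ball_iff_integrableOn_polarCoord]
  refine hprod.congr_fun (fun p hp ↦ ?_) (measurableSet_Ioo.prod measurableSet_Ioo)
  simp [abs_of_pos hp.1.1]

theorem integrableOn_log_norm_sub_ball (z : ℂ) (R : ℝ) :
    IntegrableOn (fun w : ℂ ↦ log ‖w - z‖) (ball z R) := by
  have hball : (fun w ↦ w - z) ⁻¹' ball 0 R = ball z R := by
    ext w
    simp [dist_eq_norm]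
  rw [← hball]
  exact (measurePreserving_sub_right volume z).integrableOn_comp_preimage
    (measurableEmbedding_subRight z) |>.2 (integrableOn_log_norm_ball R)

theorem circleAverage_log_norm_sub_const_eq_log_max (a c : ℂ) {r : ℝ} (hr : 0 < r) :
    circleAverage (fun w ↦ log ‖w - a‖) c r = log (max r ‖c - a‖) := by
  rw [circleAverage_log_norm_sub_const_eq_log_radius_add_posLog hr.ne',
    posLog_eq_log_max_one (by positivity), ← log_mul hr.ne' (by positivity),
    mul_max_of_nonneg _ _ hr.le, mul_one, mul_inv_cancel_left₀ hr.ne']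

theorem integral_mul_log_of_nonneg {a b : ℝ} (ha : 0 ≤ a) (hab : a ≤ b) :
    ∫ x in a..b, x * log x = (b ^ 2 * log b / 2 - b ^ 2 / 4) - (a ^ 2 * log a / 2 - a ^ 2 / 4) := by
  refine intervalIntegral.integral_eq_sub_of_hasDerivAt_of_le
    (f := fun x ↦ x ^ 2 * log x / 2 - x ^ 2 / 4) hab ?_ (fun x hx ↦ ?_)
    (continuous_mul_log.intervalIntegrable a b)
  · have : Continuous fun x : ℝ ↦ x * (x * log x) / 2 - x ^ 2 / 4 := by
      have := continuous_mul_log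
      fun_prop
    exact (this.congr fun x ↦ by ring).continuousOn
  · have hx0 : x ≠ 0 := (ha.trans_lt hx.1).ne'
    convert ((((hasDerivAt_pow 2 x).mul (hasDerivAt_log hx0)).div_const 2).sub
      ((hasDerivAt_pow 2 x).div_const 4)) using 1
    · rfl
    · field_simp
      ring

theorem integral_mul_log_max_of_one_le {s : ℝ} (hs : 1 ≤ s) :
    ∫ r in Ioo 0 1, r * log (max r s) = log s / 2 := by
  rw [setIntegral_congr_fun measurableSet_Ioo
      (fun r hr ↦ by rw [max_eq_right (hr.2.le.trans hs)]),
    ← integral_Ioc_eq_integral_Ioo, ← intervalIntegral.integral_of_le zero_le_one,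
    intervalIntegral.integral_mul_const, integral_id]
  ring

theorem integral_mul_log_max_of_le_one {s : ℝ} (hs₀ : 0 ≤ s) (hs₁ : s ≤ 1) :
    ∫ r in Ioo 0 1, r * log (max r s) = (s ^ 2 - 1) / 4 := by
  have h_below : EqOn (fun r ↦ r * log (max r s)) (fun r ↦ r * log s) (uIcc 0 s) :=
    fun r hr ↦ by simp only [max_eq_right (uIcc_of_le hs₀ ▸ hr).2]
  have h_above : EqOn (fun r ↦ r * log (max r s)) (fun r ↦ r * log r) (uIcc s 1) :=
    fun r hr ↦ by simp only [max_eq_left (uIcc_of_le hs₁ ▸ hr).1]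
  rw [← integral_Ioc_eq_integral_Ioo, ← intervalIntegral.integral_of_le zero_le_one,
    ← intervalIntegral.integral_add_adjacent_intervals
      ((continuous_mul_const _).continuousOn.congr h_below).intervalIntegrable
      (continuous_mul_log.continuousOn.congr h_above).intervalIntegrable,
    intervalIntegral.integral_congr h_below, intervalIntegral.integral_congr h_above,
    intervalIntegral.integral_mul_const, integral_id, integral_mul_log_of_nonneg hs₀ hs₁, log_one]
  ring

/-- The logarithmic potential of the uniform distribution on the unit disc:
`−(1/π) ∫_{B_1(0)} log|w − z| d𝔏(w) = (1 − |z|²)/2` if `|z| ≤ 1`, and `= −log|z|`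
if `|z| > 1`. -/
theorem stmt14 (z : ℂ) :
    -(1 / Real.pi) * ∫ w in ball (0 : ℂ) 1, Real.log ‖w - z‖ =
      if ‖z‖ ≤ 1 then (1 - ‖z‖ ^ 2) / 2
      else -Real.log ‖z‖ := by
  have hint : IntegrableOn (fun w : ℂ ↦ log ‖w - z‖) (ball 0 1) :=
    (integrableOn_log_norm_sub_ball z (1 + ‖z‖)).mono_set
      (ball_subset_ball' (by rw [dist_zero_left]))
  have hradial : ∫ w in ball (0 : ℂ) 1, log ‖w - z‖ =
      (2 * π) * ∫ r in Ioo 0 1, r * log (max r ‖z‖) := by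
    rw [integral_ball_eq_integral_circleAverage hint, smul_eq_mul]
    congr 1
    refine setIntegral_congr_fun measurableSet_Ioo fun r hr ↦ ?_
    rw [circleAverage_log_norm_sub_const_eq_log_max z 0 hr.1, zero_sub, norm_neg, smul_eq_mul]
  rw [hradial]
  split_ifs with hz
  · rw [integral_mul_log_max_of_le_one (norm_nonneg z) hz]
    field_simp
    ring
  · rw [integral_mul_log_max_of_one_le (not_le.1 hz).le]
    field_simp
end
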